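/- arXiv:1702.05260 — 2 statements merged into one kernel-verified Lean document; each statement's English description precedes it below -/
import Mathlib

section
/- There exists a constant C > 0 such that for all t > 0, ∫₀¹ e^{-tτ} √τ (∫_{2√τ}^{3} r/√(r² - 4τ) dr) dτ ≤ C⟨t⟩^{-3/2}, where ⟨t⟩ = (1 + t²)^{1/2}. -/
/-!
The inner integral is explicit: `√(r² - a²)` is an antiderivative of `r / √(r² - a²)`,
so it equals `√(9 - 4τ) ≤ 3`. For `τ ≤ 1` we have `e^{-tτ} ≤ e · e^{-(1+t)τ}`, and extending
the outer integral to `(0, ∞)` gives the Gamma integral `Γ(3/2) (1 + t)^{-3/2}`;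
finally `⟨t⟩ ≤ 1 + t`.
-/

open MeasureTheory Set Real

lemma hasDerivAt_sqrt_sq_sub_sq {a r : ℝ} (h : a ^ 2 < r ^ 2) :
    HasDerivAt (fun x => √(x ^ 2 - a ^ 2)) (r / √(r ^ 2 - a ^ 2)) r := by
  convert ((hasDerivAt_pow 2 r).sub_const (a ^ 2)).sqrt (sub_ne_zero.2 h.ne') using 1
  field_simp
  ring

theorem integral_Ioc_div_sqrt_sq_sub_sq {a b : ℝ} (ha : 0 ≤ a) (hab : a ≤ b) :
    ∫ r in Ioc a b, r / √(r ^ 2 - a ^ 2) = √(b ^ 2 - a ^ 2) := by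
  have hderiv : ∀ r ∈ Ioo a b,
      HasDerivAt (fun x => √(x ^ 2 - a ^ 2)) (r / √(r ^ 2 - a ^ 2)) r :=
    fun r hr => hasDerivAt_sqrt_sq_sub_sq (by nlinarith [hr.1])
  have hcont : ContinuousOn (fun x => √(x ^ 2 - a ^ 2)) (Icc a b) := by fun_prop
  have hint : IntegrableOn (fun r => r / √(r ^ 2 - a ^ 2)) (Ioc a b) :=
    intervalIntegral.integrableOn_deriv_of_nonneg hcont hderiv
      fun r hr => div_nonneg (ha.trans hr.1.le) (sqrt_nonneg _)
  rw [← intervalIntegral.integral_of_le hab, intervalIntegral.integral_eq_sub_of_hasDerivAt_of_le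
    hab hcont hderiv ((intervalIntegrable_iff_integrableOn_Ioc_of_le hab).2 hint)]
  simp

theorem integral_Ioc_div_sqrt_sq_sub_four_mul {τ : ℝ} (h0 : 0 ≤ τ) (h1 : 4 * τ ≤ 9) :
    ∫ r in Ioc (2 * √τ) 3, r / √(r ^ 2 - 4 * τ) = √(9 - 4 * τ) := by
  have hsq : (2 * √τ) ^ 2 = 4 * τ := by rw [mul_pow, sq_sqrt h0]; ring
  have hle : 2 * √τ ≤ 3 := by nlinarith [sqrt_nonneg τ]
  simpa [hsq, show (3 : ℝ) ^ 2 = 9 by norm_num] using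
    integral_Ioc_div_sqrt_sq_sub_sq (by positivity) hle

theorem integral_Ioc_exp_neg_mul_mul_sqrt_le {t : ℝ} (ht : -1 < t) :
    ∫ τ in Ioc (0 : ℝ) 1, exp (-t * τ) * √τ ≤
      exp 1 * Gamma (3 / 2) * (1 + t) ^ (-(3 / 2) : ℝ) := by
  have ht' : 0 < 1 + t := by linarith
  set g : ℝ → ℝ := fun τ => τ ^ ((3 / 2 : ℝ) - 1) * exp (-((1 + t) * τ))
  have hg : ∫ τ in Ioi 0, g τ = (1 / (1 + t)) ^ (3 / 2 : ℝ) * Gamma (3 / 2) :=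
    integral_rpow_mul_exp_neg_mul_Ioi (by norm_num) ht'
  have hg_int : IntegrableOn g (Ioi 0) := .of_integral_ne_zero (by rw [hg]; positivity)
  have hg_nonneg : ∀ τ ∈ Ioi (0 : ℝ), 0 ≤ g τ := fun τ hτ => by
    have hτ : (0 : ℝ) < τ := hτ
    positivity
  have hpt : ∀ τ ∈ Ioc (0 : ℝ) 1, exp (-t * τ) * √τ ≤ exp 1 * g τ := fun τ hτ => by
    have hsqrt : √τ = τ ^ ((3 / 2 : ℝ) - 1) := by rw [sqrt_eq_rpow]; norm_num
    have hexp : exp (-t * τ) = exp τ * exp (-((1 + t) * τ)) := by rw [← exp_add]; ring_nf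
    calc exp (-t * τ) * √τ = exp τ * g τ := by rw [hsqrt, hexp]; simp only [g]; ring
      _ ≤ exp 1 * g τ := mul_le_mul_of_nonneg_right (exp_le_exp.2 hτ.2) (hg_nonneg τ hτ.1)
  calc ∫ τ in Ioc (0 : ℝ) 1, exp (-t * τ) * √τ
        ≤ ∫ τ in Ioc (0 : ℝ) 1, exp 1 * g τ :=
        setIntegral_mono_on (Continuous.integrableOn_Ioc (by fun_prop))
          ((hg_int.mono_set Ioc_subset_Ioi_self).const_mul _) measurableSet_Ioc hpt
    _ = exp 1 * ∫ τ in Ioc (0 : ℝ) 1, g τ := integral_const_mul _ _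
    _ ≤ exp 1 * ∫ τ in Ioi 0, g τ := by
        refine mul_le_mul_of_nonneg_left ?_ (exp_pos 1).le
        exact setIntegral_mono_set hg_int
          ((ae_restrict_iff' measurableSet_Ioi).2 (.of_forall hg_nonneg))
          Ioc_subset_Ioi_self.eventuallyLE
    _ = exp 1 * Gamma (3 / 2) * (1 + t) ^ (-(3 / 2) : ℝ) := by
        rw [hg, one_div, inv_rpow ht'.le, ← rpow_neg ht'.le]
        ring

/-- There exists `C > 0` such that for all `t > 0`,
`∫₀¹ e^{-tτ} √τ (∫_{2√τ}^{3} r/√(r² - 4τ) dr) dτ ≤ C⟨t⟩^{-3/2}`,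
where `⟨t⟩ = (1 + t²)^{1/2}`. -/
theorem integral_decay_three_halves :
    ∃ C > (0 : ℝ), ∀ t : ℝ, 0 < t →
      (∫ τ in Set.Ioc (0 : ℝ) 1, Real.exp (-t * τ) * Real.sqrt τ *
          ∫ r in Set.Ioc (2 * Real.sqrt τ) 3, r / Real.sqrt (r ^ 2 - 4 * τ)) ≤
        C * Real.sqrt (1 + t ^ 2) ^ (-(3 / 2) : ℝ) := by
  refine ⟨3 * exp 1 * Gamma (3 / 2), by positivity, fun t ht => ?_⟩
  have hbracket : √(1 + t ^ 2) ≤ 1 + t := sqrt_le_iff.2 ⟨by linarith, by nlinarith⟩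
  calc _ = ∫ τ in Ioc (0 : ℝ) 1, exp (-t * τ) * √τ * √(9 - 4 * τ) :=
        setIntegral_congr_fun measurableSet_Ioc fun τ hτ => by
          rw [integral_Ioc_div_sqrt_sq_sub_four_mul hτ.1.le (by linarith [hτ.2])]
    _ ≤ ∫ τ in Ioc (0 : ℝ) 1, exp (-t * τ) * √τ * 3 :=
        setIntegral_mono_on (Continuous.integrableOn_Ioc (by fun_prop))
          (Continuous.integrableOn_Ioc (by fun_prop)) measurableSet_Ioc fun τ hτ => by
          gcongr
          exact sqrt_le_iff.2 ⟨by norm_num, by linarith [hτ.1]⟩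
    _ = 3 * ∫ τ in Ioc (0 : ℝ) 1, exp (-t * τ) * √τ := by rw [integral_mul_const, mul_comm]
    _ ≤ 3 * (exp 1 * Gamma (3 / 2) * (1 + t) ^ (-(3 / 2) : ℝ)) := by
        gcongr
        exact integral_Ioc_exp_neg_mul_mul_sqrt_le (by linarith)
    _ ≤ 3 * exp 1 * Gamma (3 / 2) * √(1 + t ^ 2) ^ (-(3 / 2) : ℝ) := by
        rw [← mul_assoc, ← mul_assoc]
        refine mul_le_mul_of_nonneg_left ?_ (by positivity)
        exact rpow_le_rpow_of_nonpos (by positivity) hbracket (by norm_num)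
end

section
/- Define Γ(t,ξ) = (e^{tλ₂(ξ)} - e^{tλ₁(ξ)})/(λ₂(ξ) - λ₁(ξ)) where λ_{1,2}(ξ) = -|ξ|²/2 ± √(|ξ|⁴/4 - ξ₃²) (complex square root). Then there exists C > 0 such that t|ξ|² |∂ₜΓ(t,ξ)| ≤ C for all t > 0 and all ξ ∈ ℝ³ with λ₁(ξ) ≠ λ₂(ξ). -/
/-!
Write `λ = -c ± μ` with `c = |ξ|²/2` and `μ² = c² - ξ₃²`. Then
`∂ₜΓ = e^{-tc} (cosh tμ - (c/μ) sinh tμ)`, and with `b = tc` the quantity to bound is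
`2b e^{-b} |cosh tμ - (b/tμ) sinh tμ|`. If `μ = iν` is imaginary this is
`2b e^{-b} |cos tν - c sin(tν)/ν| ≤ 2b e^{-b} (1 + b)`. If `0 < μ ≤ c` is real, put `a = tμ ≤ b`:
then `cosh a - (b/a) sinh a = e^{-a} - ((b - a)/a) sinh a` and `e^{-b} sinh a` decays like
`e^{-(b-a)}`, so everything is controlled by `yⁿ e^{-y} ≤ n!`.
-/

noncomputable section

/-- The eigenvalue `λ₁(ξ) = -|ξ|²/2 + √(|ξ|⁴/4 - ξ₃²)` (complex square root). -/
def lamP (ξ₁ ξ₂ ξ₃ : ℝ) : ℂ :=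
  -(((ξ₁ ^ 2 + ξ₂ ^ 2 + ξ₃ ^ 2) / 2 : ℝ) : ℂ)
    + (((ξ₁ ^ 2 + ξ₂ ^ 2 + ξ₃ ^ 2) ^ 2 / 4 - ξ₃ ^ 2 : ℝ) : ℂ) ^ ((1 : ℂ) / 2)

/-- The eigenvalue `λ₂(ξ) = -|ξ|²/2 - √(|ξ|⁴/4 - ξ₃²)` (complex square root). -/
def lamM (ξ₁ ξ₂ ξ₃ : ℝ) : ℂ :=
  -(((ξ₁ ^ 2 + ξ₂ ^ 2 + ξ₃ ^ 2) / 2 : ℝ) : ℂ)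
    - (((ξ₁ ^ 2 + ξ₂ ^ 2 + ξ₃ ^ 2) ^ 2 / 4 - ξ₃ ^ 2 : ℝ) : ℂ) ^ ((1 : ℂ) / 2)

namespace Real

lemma pow_mul_exp_neg_le_factorial {y : ℝ} (hy : 0 ≤ y) (n : ℕ) :
    y ^ n * exp (-y) ≤ n.factorial := by
  rw [exp_neg, ← div_eq_mul_inv, div_le_iff₀ (exp_pos y), ← div_le_iff₀' (by positivity)]
  exact pow_div_factorial_le_exp _ hy n

lemma mul_exp_neg_mul_abs_cosh_sub_le {a b : ℝ} (ha : 0 < a) (hab : a ≤ b) :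
    b * exp (-b) * |cosh a - b / a * sinh a| ≤ 4 := by
  set c := b - a with hc
  have hb : 0 ≤ b := ha.le.trans hab
  have hc0 : 0 ≤ c := sub_nonneg.2 hab
  have hs₀ : 0 ≤ 1 - exp (-(2 * a)) := by
    linarith [exp_le_one_iff.2 (by linarith : -(2 * a) ≤ 0)]
  have hs₁ : 1 - exp (-(2 * a)) ≤ 1 := by linarith [exp_pos (-(2 * a))]
  have hs₂ : 1 - exp (-(2 * a)) ≤ 2 * a := by linarith [add_one_le_exp (-(2 * a))]
  -- `e^{-b} sinh a = e^{-c} (1 - e^{-2a}) / 2`: the decay is in the gap `c = b - a`.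
  have hid : b * exp (-b) * (cosh a - b / a * sinh a)
      = b * exp (-a) * exp (-b) - b / a * (1 - exp (-(2 * a))) * (c * exp (-c)) / 2 := by
    rw [cosh_eq, sinh_eq, hc, neg_sub, exp_sub, exp_neg, exp_neg, exp_neg,
      show 2 * a = a + a by ring, exp_add]
    field_simp
    ring
  have hgap : b / a * (1 - exp (-(2 * a))) ≤ 1 + 2 * c := by
    have : c / a * (1 - exp (-(2 * a))) ≤ 2 * c := by
      rw [div_mul_eq_mul_div, div_le_iff₀ ha]
      nlinarith
    rw [show b = a + c by ring, add_div, div_self ha.ne', add_mul, one_mul]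
    linarith
  have hb₁ : b * exp (-a) * exp (-b) ≤ 1 := by
    have h₁ := pow_mul_exp_neg_le_factorial hb 1
    norm_num at h₁
    have : exp (-a) ≤ 1 := exp_le_one_iff.2 (by linarith)
    nlinarith [mul_nonneg hb (exp_pos (-b)).le]
  have hc₁ := pow_mul_exp_neg_le_factorial hc0 1
  have hc₂ := pow_mul_exp_neg_le_factorial hc0 2
  norm_num [Nat.factorial] at hc₁ hc₂
  calc b * exp (-b) * |cosh a - b / a * sinh a|
      = |b * exp (-a) * exp (-b) - b / a * (1 - exp (-(2 * a))) * (c * exp (-c)) / 2| := by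
        rw [← hid, abs_mul, abs_of_nonneg (by positivity : 0 ≤ b * exp (-b))]
    _ ≤ b * exp (-a) * exp (-b) + b / a * (1 - exp (-(2 * a))) * (c * exp (-c)) / 2 := by
        refine (abs_sub _ _).trans_eq ?_
        rw [abs_of_nonneg (by positivity), abs_of_nonneg (by positivity)]
    _ ≤ 1 + (1 + 2 * c) * (c * exp (-c)) / 2 := by gcongr
    _ ≤ 4 := by nlinarith

lemma mul_exp_neg_mul_abs_cos_sub_le {b y : ℝ} (hb : 0 ≤ b) (hy : |y| ≤ b) (x : ℝ) :
    b * exp (-b) * |cos x - y| ≤ 4 := by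
  have h₁ := pow_mul_exp_neg_le_factorial hb 1
  have h₂ := pow_mul_exp_neg_le_factorial hb 2
  norm_num [Nat.factorial] at h₁ h₂
  calc b * exp (-b) * |cos x - y| ≤ b * exp (-b) * (1 + b) := by
        gcongr
        exact (abs_sub _ _).trans (add_le_add (abs_cos_le_one x) hy)
    _ = b * exp (-b) + b ^ 2 * exp (-b) := by ring
    _ ≤ 4 := by linarith

end Real

namespace Complex

lemma ofReal_cpow_one_half_of_pos {d : ℝ} (hd : 0 < d) :
    (d : ℂ) ^ ((1 : ℂ) / 2) = (√d : ℝ) := by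
  rw [Real.sqrt_eq_rpow, ofReal_cpow hd.le]
  norm_num

lemma ofReal_cpow_one_half_of_neg {d : ℝ} (hd : d < 0) :
    (d : ℂ) ^ ((1 : ℂ) / 2) = (√(-d) : ℝ) * I := by
  rw [ofReal_cpow_of_nonpos hd.le, ← ofReal_neg, ofReal_cpow_one_half_of_pos (neg_pos.2 hd),
    show (Real.pi : ℂ) * I * (1 / 2) = (Real.pi / 2 : ℝ) * I by push_cast; ring, exp_mul_I,
    ← ofReal_cos, ← ofReal_sin, Real.cos_pi_div_two, Real.sin_pi_div_two]
  simp

lemma mul_exp_sub_mul_exp_div_sub_eq (z c μ : ℂ) (hμ : μ ≠ 0) :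
    ((-c - μ) * exp (z * (-c - μ)) - (-c + μ) * exp (z * (-c + μ))) / ((-c - μ) - (-c + μ))
      = exp (-(z * c)) * (cosh (z * μ) - c / μ * sinh (z * μ)) := by
  rw [cosh, sinh, show z * (-c - μ) = -(z * c) + -(z * μ) by ring,
    show z * (-c + μ) = -(z * c) + z * μ by ring, exp_add, exp_add, exp_neg (z * μ),
    show (-c - μ) - (-c + μ) = -(2 * μ) by ring, div_eq_iff (by simpa using hμ)]
  have := exp_ne_zero (z * μ)
  field_simp
  ring

lemma mul_norm_exp_mul_cosh_sub_le_of_real {t c m : ℝ} (ht : 0 < t) (hm : 0 < m) (hmc : m ≤ c) :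
    t * c * ‖exp (-(t * c)) * (cosh (t * m) - c / m * sinh (t * m))‖ ≤ 4 := by
  have hreal : exp (-(t * c)) * (cosh (t * m) - c / m * sinh (t * m))
      = (Real.exp (-(t * c)) * (Real.cosh (t * m) - t * c / (t * m) * Real.sinh (t * m)) : ℝ) := by
    rw [mul_div_mul_left _ _ ht.ne']
    push_cast
    rfl
  rw [hreal, norm_real, Real.norm_eq_abs, abs_mul, abs_of_pos (Real.exp_pos _), ← mul_assoc]
  exact Real.mul_exp_neg_mul_abs_cosh_sub_le (by positivity)
    (mul_le_mul_of_nonneg_left hmc ht.le)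

lemma mul_norm_exp_mul_cosh_sub_le_of_imaginary {t c ν : ℝ} (ht : 0 < t) (hc : 0 ≤ c)
    (hν : ν ≠ 0) :
    t * c * ‖exp (-(t * c)) * (cosh (t * (ν * I)) - c / (ν * I) * sinh (t * (ν * I)))‖ ≤ 4 := by
  have hreal : exp (-(t * c)) * (cosh (t * (ν * I)) - c / (ν * I) * sinh (t * (ν * I)))
      = (Real.exp (-(t * c)) * (Real.cos (t * ν) - c * Real.sin (t * ν) / ν) : ℝ) := by
    rw [← mul_assoc, cosh_mul_I, sinh_mul_I]
    push_cast
    field_simp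
  have hsin : |c * Real.sin (t * ν) / ν| ≤ t * c := by
    rw [abs_div, abs_mul, abs_of_nonneg hc, div_le_iff₀ (abs_pos.2 hν)]
    calc c * |Real.sin (t * ν)| ≤ c * |t * ν| := mul_le_mul_of_nonneg_left Real.abs_sin_le_abs hc
      _ = t * c * |ν| := by rw [abs_mul, abs_of_pos ht]; ring
  rw [hreal, norm_real, Real.norm_eq_abs, abs_mul, abs_of_pos (Real.exp_pos _), ← mul_assoc]
  exact Real.mul_exp_neg_mul_abs_cos_sub_le (by positivity) hsin _

end Complex

/-- With `Γ(t,ξ) = (e^{tλ₂} - e^{tλ₁})/(λ₂ - λ₁)`, so that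
`∂ₜΓ(t,ξ) = (λ₂e^{tλ₂} - λ₁e^{tλ₁})/(λ₂ - λ₁)`, there exists `C > 0` such that
`t|ξ|² |∂ₜΓ(t,ξ)| ≤ C` for all `t > 0` and all `ξ ∈ ℝ³` with `λ₁(ξ) ≠ λ₂(ξ)`. -/
theorem symbol_time_derivative_bound :
    ∃ C > (0 : ℝ), ∀ t : ℝ, 0 < t → ∀ ξ₁ ξ₂ ξ₃ : ℝ,
      lamP ξ₁ ξ₂ ξ₃ ≠ lamM ξ₁ ξ₂ ξ₃ →
      t * (ξ₁ ^ 2 + ξ₂ ^ 2 + ξ₃ ^ 2) *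
          ‖(lamM ξ₁ ξ₂ ξ₃ * Complex.exp ((t : ℂ) * lamM ξ₁ ξ₂ ξ₃)
              - lamP ξ₁ ξ₂ ξ₃ * Complex.exp ((t : ℂ) * lamP ξ₁ ξ₂ ξ₃))
            / (lamM ξ₁ ξ₂ ξ₃ - lamP ξ₁ ξ₂ ξ₃)‖ ≤ C := by
  refine ⟨8, by norm_num, fun t ht ξ₁ ξ₂ ξ₃ hne => ?_⟩
  set r := ξ₁ ^ 2 + ξ₂ ^ 2 + ξ₃ ^ 2
  set d := r ^ 2 / 4 - ξ₃ ^ 2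
  rw [show lamM ξ₁ ξ₂ ξ₃ = -((r / 2 : ℝ) : ℂ) - (d : ℂ) ^ ((1 : ℂ) / 2) from rfl,
    show lamP ξ₁ ξ₂ ξ₃ = -((r / 2 : ℝ) : ℂ) + (d : ℂ) ^ ((1 : ℂ) / 2) from rfl] at hne ⊢
  have hμ : (d : ℂ) ^ ((1 : ℂ) / 2) ≠ 0 := fun h => hne (by rw [h]; ring)
  rw [Complex.mul_exp_sub_mul_exp_div_sub_eq _ _ _ hμ, show t * r = 2 * (t * (r / 2)) by ring,
    mul_assoc]
  refine (mul_le_mul_of_nonneg_left ?_ zero_le_two).trans_eq (by norm_num : (2 : ℝ) * 4 = 8)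
  rcases lt_trichotomy d 0 with hd | hd | hd
  · rw [Complex.ofReal_cpow_one_half_of_neg hd]
    exact Complex.mul_norm_exp_mul_cosh_sub_le_of_imaginary ht (by positivity)
      (Real.sqrt_pos.2 (neg_pos.2 hd)).ne'
  · simp [hd] at hμ
  · rw [Complex.ofReal_cpow_one_half_of_pos hd]
    exact Complex.mul_norm_exp_mul_cosh_sub_le_of_real ht (Real.sqrt_pos.2 hd)
      (Real.sqrt_le_iff.2 ⟨by positivity, by simp only [d]; nlinarith⟩)
end
end
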